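/- Let G be a finite simple graph on n ≥ 4 vertices. Then f(G) ≤ ⌈(−3 + √(8n − 15))/2⌉. -/
import Mathlib


open Finset

variable {V : Type*}

open scoped Classical in
/-- Degree of `v` in the subgraph of `G` induced on the vertex set `A`
(number of neighbours of `v` inside `A`). -/
noncomputable def degOn (G : SimpleGraph V) (A : Finset V) (v : V) : ℕ :=
  (A.filter fun w => G.Adj v w).card

/-- Maximum degree of the subgraph of `G` induced on `A`. -/
noncomputable def maxDegOn (G : SimpleGraph V) (A : Finset V) : ℕ :=
  A.sup (degOn G A)

open scoped Classical in
/-- The subgraph of `G` induced on `A` has fewer than `k` vertices or at least `k`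
vertices realising its maximum degree. -/
def equates (G : SimpleGraph V) (k : ℕ) (A : Finset V) : Prop :=
  A.card < k ∨ k ≤ (A.filter fun v => degOn G A v = maxDegOn G A).card

open scoped Classical in
/-- `f_k` of the subgraph of `G` induced on `A`: the minimum number of vertices of `A`
whose deletion leaves an induced subgraph with fewer than `k` vertices or with at
least `k` vertices realising its maximum degree. -/
noncomputable def fkOn (G : SimpleGraph V) (k : ℕ) (A : Finset V) : ℕ :=
  sInf {m | ∃ S, S ⊆ A ∧ S.card = m ∧ equates G k (A \ S)}

/-- `f_k(G)`. -/
noncomputable def fk [Fintype V] (G : SimpleGraph V) (k : ℕ) : ℕ :=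
  fkOn G k Finset.univ

/-- `diff` of the subgraph of `G` induced on `A`: the largest degree minus the
second-largest degree (with multiplicity) of this subgraph. -/
noncomputable def diffOn (G : SimpleGraph V) (A : Finset V) : ℕ :=
  maxDegOn G A - ((A.val.map (degOn G A)).erase (maxDegOn G A)).sup

/-- `diff(G) = d₁ - d₂`, the difference between the largest and second-largest
vertex degrees of `G`. -/
noncomputable def diffDeg [Fintype V] (G : SimpleGraph V) : ℕ :=
  diffOn G Finset.univ

section Helpers
open scoped Classical

variable (G : SimpleGraph V)

lemma degOn_mono {A B : Finset V} (h : A ⊆ B) (v : V) : degOn G A v ≤ degOn G B v := by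
  classical
  simp only [degOn]
  exact card_le_card (filter_subset_filter _ h)

lemma le_maxDegOn {A : Finset V} {v : V} (hv : v ∈ A) : degOn G A v ≤ maxDegOn G A :=
  Finset.le_sup hv

lemma exists_maxDegOn {A : Finset V} (h : A.Nonempty) :
    ∃ v ∈ A, degOn G A v = maxDegOn G A := by
  obtain ⟨b, hb, he⟩ := Finset.exists_mem_eq_sup A h (degOn G A)
  exact ⟨b, hb, he.symm⟩

lemma degOn_sdiff (A D : Finset V) (v : V) :
    degOn G (A \ D) v = ((A.filter fun w => G.Adj v w) \ D).card := by
  classical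
  simp only [degOn]
  congr 1
  ext x
  simp only [mem_filter, mem_sdiff]
  tauto

lemma fkOn_le {A S : Finset V} {k : ℕ} (hS : S ⊆ A) (he : equates G k (A \ S)) :
    fkOn G k A ≤ S.card :=
  Nat.sInf_le ⟨S, hS, rfl, he⟩

lemma fkOn_spec (A : Finset V) :
    ∃ S, S ⊆ A ∧ S.card = fkOn G 2 A ∧ equates G 2 (A \ S) := by
  have hne : {m | ∃ S, S ⊆ A ∧ S.card = m ∧ equates G 2 (A \ S)}.Nonempty := by
    refine ⟨A.card, A, subset_rfl, rfl, ?_⟩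
    left
    simp
  exact Nat.sInf_mem hne

lemma fkOn_le_add {A T : Finset V} (hT : T ⊆ A) :
    fkOn G 2 A ≤ T.card + fkOn G 2 (A \ T) := by
  obtain ⟨S, hS, hcard, he⟩ := fkOn_spec G (A \ T)
  have hsub : T ∪ S ⊆ A := union_subset hT (hS.trans (sdiff_subset))
  have heq : A \ (T ∪ S) = (A \ T) \ S := by
    ext x; simp only [mem_sdiff, mem_union]; tauto
  have := fkOn_le G hsub (heq ▸ he)
  calc fkOn G 2 A ≤ (T ∪ S).card := this
    _ ≤ T.card + S.card := card_union_le _ _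
    _ = T.card + fkOn G 2 (A \ T) := by rw [hcard]

lemma equates_of_maxDeg_le_one {A : Finset V} (h : maxDegOn G A ≤ 1) :
    equates G 2 A := by
  classical
  by_cases hc : A.card < 2
  · exact Or.inl hc
  right
  push_neg at hc
  rcases Nat.lt_or_ge (maxDegOn G A) 1 with h0 | h1
  · -- max degree 0 : every vertex attains it
    have : A.filter (fun v => degOn G A v = maxDegOn G A) = A := by
      apply filter_true_of_mem
      intro v hv
      have := le_maxDegOn G hv
      omega
    rw [this]; exact hc
  · -- max degree 1
    have hΔ : maxDegOn G A = 1 := le_antisymm h h1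
    have hne : A.Nonempty := card_pos.mp (by omega)
    obtain ⟨v, hv, hdv⟩ := exists_maxDegOn G hne
    have h1v : (A.filter fun w => G.Adj v w).Nonempty := by
      rw [← card_pos]
      simp only [degOn] at hdv
      omega
    obtain ⟨w, hw⟩ := h1v
    rw [mem_filter] at hw
    have hadj : G.Adj v w := hw.2
    have hwA : w ∈ A := hw.1
    have hdw1 : 1 ≤ degOn G A w := by
      simp only [degOn]
      rw [Nat.succ_le_iff, card_pos]
      exact ⟨v, mem_filter.mpr ⟨hv, hadj.symm⟩⟩
    have hdw : degOn G A w = maxDegOn G A := by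
      have := le_maxDegOn G hwA
      omega
    have hvw : v ≠ w := fun h => G.irrefl (h ▸ hadj)
    have : ({v, w} : Finset V) ⊆ A.filter (fun x => degOn G A x = maxDegOn G A) := by
      intro x hx
      rcases mem_insert.mp hx with rfl | hx
      · exact mem_filter.mpr ⟨hv, hdv⟩
      · rw [mem_singleton] at hx; subst hx; exact mem_filter.mpr ⟨hwA, hdw⟩
    calc 2 = ({v, w} : Finset V).card := (card_pair hvw).symm
      _ ≤ _ := card_le_card this

/-- Lemma A: `f ≤ diff`. -/
lemma fkOn_le_diff {A : Finset V} {v : V} (hA : 2 ≤ A.card) (hv : v ∈ A)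
    (hdv : degOn G A v = maxDegOn G A) :
    fkOn G 2 A ≤ maxDegOn G A - (A.erase v).sup (degOn G A) := by
  classical
  set Δ := maxDegOn G A with hΔ
  set d₂ := (A.erase v).sup (degOn G A) with hd₂
  have hd₂le : d₂ ≤ Δ := Finset.sup_le fun w hw => le_maxDegOn G (mem_of_mem_erase hw)
  have hne : (A.erase v).Nonempty := by
    rw [← card_pos, card_erase_of_mem hv]; omega
  obtain ⟨u, hu, hdu⟩ := Finset.exists_mem_eq_sup _ hne (degOn G A)
  have huv : u ≠ v := ne_of_mem_erase hu
  have huA : u ∈ A := mem_of_mem_erase hu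
  set Nv := A.filter (fun w => G.Adj v w) with hNv
  set Nu := A.filter (fun w => G.Adj u w) with hNu
  have hNvcard : Nv.card = Δ := hdv
  have hNucard : Nu.card = d₂ := hdu.symm
  have hvNv : v ∉ Nv := fun h => G.irrefl (mem_filter.mp h).2
  -- the intersection bound
  have hkey : Δ - d₂ ≤ (Nv \ insert u Nu).card := by
    have hsub : Nv ∩ insert u Nu ⊆ insert u (Nu.erase v) := by
      intro x hx
      rw [mem_inter, mem_insert] at hx
      rcases hx.2 with rfl | hx2
      · exact mem_insert_self _ _
      · refine mem_insert_of_mem (mem_erase.mpr ⟨?_, hx2⟩)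
        intro hxv; subst hxv; exact hvNv hx.1
    have hbound : (Nv ∩ insert u Nu).card ≤ d₂ := by
      by_cases hvu : v ∈ Nu
      · calc (Nv ∩ insert u Nu).card ≤ (insert u (Nu.erase v)).card := card_le_card hsub
          _ ≤ (Nu.erase v).card + 1 := card_insert_le _ _
          _ = d₂ := by rw [card_erase_of_mem hvu, hNucard]; have : 1 ≤ Nu.card := card_pos.mpr ⟨v, hvu⟩; omega
      · -- v ∉ Nu means u not adjacent to v, so u ∉ Nv
        have huNv : u ∉ Nv := by
          intro h
          exact hvu (mem_filter.mpr ⟨hv, ((mem_filter.mp h).2).symm⟩)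
        have : Nv ∩ insert u Nu ⊆ Nu := by
          intro x hx
          rw [mem_inter, mem_insert] at hx
          rcases hx.2 with rfl | hx2
          · exact absurd hx.1 huNv
          · exact hx2
        calc (Nv ∩ insert u Nu).card ≤ Nu.card := card_le_card this
          _ = d₂ := hNucard
    have := card_sdiff_add_card_inter Nv (insert u Nu)
    omega
  obtain ⟨D, hD, hDcard⟩ := Finset.exists_subset_card_eq hkey
  have hDNv : D ⊆ Nv := hD.trans (sdiff_subset)
  have hDA : D ⊆ A := hDNv.trans (filter_subset _ _)
  have hvD : v ∉ D := fun h => hvNv (hDNv h)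
  have huD : u ∉ D := by
    intro h
    have := hD h
    rw [mem_sdiff] at this
    exact this.2 (mem_insert_self _ _)
  have hDNu : Disjoint D Nu := by
    rw [disjoint_left]
    intro x hx hxNu
    have := hD hx
    rw [mem_sdiff] at this
    exact this.2 (mem_insert_of_mem hxNu)
  set A' := A \ D with hA'
  have hvA' : v ∈ A' := mem_sdiff.mpr ⟨hv, hvD⟩
  have huA' : u ∈ A' := mem_sdiff.mpr ⟨huA, huD⟩
  -- degrees in A'
  have hdegv : degOn G A' v = d₂ := by
    rw [hA', degOn_sdiff, ← hNv, card_sdiff_of_subset hDNv, hNvcard, hDcard]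
    omega
  have hdegu : degOn G A' u = d₂ := by
    rw [hA', degOn_sdiff, ← hNu, sdiff_eq_self_of_disjoint hDNu.symm, hNucard]
  have hmax' : maxDegOn G A' = d₂ := by
    apply le_antisymm
    · apply Finset.sup_le
      intro w hw
      have hwA : w ∈ A := (mem_sdiff.mp hw).1
      by_cases hwv : w = v
      · subst hwv; rw [hdegv]
      · calc degOn G A' w ≤ degOn G A w := degOn_mono G sdiff_subset w
          _ ≤ d₂ := Finset.le_sup (mem_erase.mpr ⟨hwv, hwA⟩)
    · rw [← hdegu]; exact le_maxDegOn G huA'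
  have heq : equates G 2 A' := by
    right
    have : ({v, u} : Finset V) ⊆ A'.filter (fun x => degOn G A' x = maxDegOn G A') := by
      intro x hx
      rcases mem_insert.mp hx with rfl | hx
      · exact mem_filter.mpr ⟨hvA', by rw [hdegv, hmax']⟩
      · rw [mem_singleton] at hx; subst hx
        exact mem_filter.mpr ⟨huA', by rw [hdegu, hmax']⟩
    calc 2 = ({v, u} : Finset V).card := (card_pair huv.symm).symm
      _ ≤ _ := card_le_card this
  calc fkOn G 2 A ≤ D.card := fkOn_le G hDA heq
    _ = Δ - d₂ := hDcard

/-- Main induction. -/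
lemma fkOn_le_of_maxDeg (m : ℕ) : ∀ A : Finset V,
    2 * maxDegOn G A ≤ m ^ 2 + 3 * m + 2 → fkOn G 2 A ≤ m := by
  induction m with
  | zero =>
    intro A h
    have : maxDegOn G A ≤ 1 := by omega
    have he := equates_of_maxDeg_le_one G this
    have := fkOn_le G (empty_subset A) (by rwa [sdiff_empty])
    simpa using this
  | succ m ih =>
    intro A h
    by_cases hc : A.card < 2
    · have he : equates G 2 A := Or.inl hc
      have := fkOn_le G (empty_subset A) (by rwa [sdiff_empty])
      simp at this
      omega
    push_neg at hc
    have hne : A.Nonempty := card_pos.mp (by omega)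
    obtain ⟨v, hv, hdv⟩ := exists_maxDegOn G hne
    set Δ := maxDegOn G A with hΔ
    set d₂ := (A.erase v).sup (degOn G A) with hd₂
    by_cases hdiff : Δ - d₂ ≤ m + 1
    · calc fkOn G 2 A ≤ Δ - d₂ := fkOn_le_diff G hc hv hdv
        _ ≤ m + 1 := hdiff
    · push_neg at hdiff
      have hd₂le : d₂ ≤ Δ := Finset.sup_le fun w hw => le_maxDegOn G (mem_of_mem_erase hw)
      -- delete v
      have hmax' : maxDegOn G (A \ {v}) ≤ d₂ := by
        apply Finset.sup_le
        intro w hw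
        rw [mem_sdiff, mem_singleton] at hw
        calc degOn G (A \ {v}) w ≤ degOn G A w := degOn_mono G sdiff_subset w
          _ ≤ d₂ := Finset.le_sup (mem_erase.mpr ⟨hw.2, hw.1⟩)
      have hih : fkOn G 2 (A \ {v}) ≤ m := by
        apply ih
        have hΔle : 2 * Δ ≤ (m + 1) ^ 2 + 3 * (m + 1) + 2 := h
        have hd : d₂ + (m + 2) ≤ Δ := by omega
        have hexp : (m + 1) ^ 2 + 3 * (m + 1) + 2 = (m ^ 2 + 3 * m + 2) + (2 * m + 4) := by
          ring
        have h2 : 2 * d₂ ≤ m ^ 2 + 3 * m + 2 := by linarith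
        linarith [hmax']
      have hsub : ({v} : Finset V) ⊆ A := singleton_subset_iff.mpr hv
      calc fkOn G 2 A ≤ ({v} : Finset V).card + fkOn G 2 (A \ {v}) := fkOn_le_add G hsub
        _ ≤ 1 + m := by rw [card_singleton]; omega
        _ = m + 1 := by omega

end Helpers


/-- If `G` is a graph on `n ≥ 4` vertices then
`f(G) ≤ ⌈(-3 + √(8n - 15)) / 2⌉`. -/
theorem stmt9 {V : Type*} [Fintype V] (G : SimpleGraph V)
    (hn : 4 ≤ Fintype.card V) :
    (fk G 2 : ℤ) ≤
      ⌈(-3 + Real.sqrt (8 * (Fintype.card V : ℝ) - 15)) / 2⌉ := by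
  classical
  set n := Fintype.card V with hndef
  set c : ℤ := ⌈(-3 + Real.sqrt (8 * (n : ℝ) - 15)) / 2⌉ with hc
  have hcpos : 1 ≤ c := by
    rw [hc]
    rw [Int.le_ceil_iff]
    push_cast
    have h9 : (9 : ℝ) < 8 * (n : ℝ) - 15 := by
      have : (4 : ℝ) ≤ n := by exact_mod_cast hn
      linarith
    have h3 : (3 : ℝ) < Real.sqrt (8 * (n : ℝ) - 15) := by
      have : (3 : ℝ) = Real.sqrt 9 := by
        rw [show (9 : ℝ) = 3 ^ 2 by norm_num, Real.sqrt_sq (by norm_num : (0:ℝ) ≤ 3)]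
      rw [this]
      exact Real.sqrt_lt_sqrt (by norm_num) h9
    linarith
  set m : ℕ := c.toNat with hm
  have hcm : (m : ℤ) = c := Int.toNat_of_nonneg (by omega)
  have hm1 : 1 ≤ m := by omega
  -- From ceiling: 2n ≤ m² + 3m + 6
  have hub : 2 * n ≤ m ^ 2 + 3 * m + 6 := by
    have hle : (-3 + Real.sqrt (8 * (n : ℝ) - 15)) / 2 ≤ (c : ℝ) := Int.le_ceil _
    have hcr : (c : ℝ) = (m : ℝ) := by exact_mod_cast hcm.symm
    rw [hcr] at hle
    have hsq : Real.sqrt (8 * (n : ℝ) - 15) ≤ 2 * m + 3 := by linarith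
    have h1 : 8 * (n : ℝ) - 15 ≤ (2 * m + 3) ^ 2 := by
      have hnn : (0:ℝ) ≤ 8 * (n : ℝ) - 15 := by
        have : (4 : ℝ) ≤ n := by exact_mod_cast hn
        linarith
      calc 8 * (n : ℝ) - 15 = Real.sqrt (8 * (n : ℝ) - 15) ^ 2 := (Real.sq_sqrt hnn).symm
        _ ≤ (2 * m + 3) ^ 2 := by
            apply pow_le_pow_left₀ (Real.sqrt_nonneg _) hsq
    have : (8 : ℝ) * n ≤ 4 * m ^ 2 + 12 * m + 24 := by nlinarith
    have : (8 : ℕ) * n ≤ 4 * m ^ 2 + 12 * m + 24 := by exact_mod_cast this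
    omega
  -- main bound on fk
  suffices hfk : fk G 2 ≤ m by
    calc (fk G 2 : ℤ) ≤ (m : ℤ) := by exact_mod_cast hfk
      _ = c := hcm
  rw [fk]
  set A : Finset V := (Finset.univ : Finset V) with hA
  have hcard : A.card = n := by simp [hA, hndef]
  have hΔn : maxDegOn G A ≤ n - 1 := by
    apply Finset.sup_le
    intro v hv
    have : (A.filter fun w => G.Adj v w) ⊆ A.erase v := by
      intro x hx
      rw [mem_filter] at hx
      exact mem_erase.mpr ⟨fun h => G.irrefl (h ▸ hx.2), hx.1⟩
    calc degOn G A v ≤ (A.erase v).card := by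
          rw [degOn]; exact card_le_card (by convert this using 2)
      _ = n - 1 := by rw [card_erase_of_mem hv, hcard]
  by_cases hcase : 2 * maxDegOn G A ≤ m ^ 2 + 3 * m + 2
  · exact fkOn_le_of_maxDeg G m A hcase
  -- tight case: Δ = n - 1 and 2n = m² + 3m + 6
  push_neg at hcase
  have hΔeq : maxDegOn G A = n - 1 ∧ 2 * n = m ^ 2 + 3 * m + 6 := by
    obtain ⟨r, hr⟩ := Nat.even_mul_succ_self m
    have ht : m ^ 2 + 3 * m = 2 * (r + m) := by
      have h1 : m ^ 2 + 3 * m = m * (m + 1) + 2 * m := by ring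
      rw [h1, hr]; ring
    have hub' : 2 * n ≤ 2 * (r + m) + 6 := by linarith [hub, ht]
    have hcase' : 2 * (r + m) + 2 < 2 * maxDegOn G A := by linarith [hcase, ht]
    have key : maxDegOn G A = n - 1 ∧ 2 * n = 2 * (r + m) + 6 := by
      constructor <;> omega
    exact ⟨key.1, by linarith [key.2, ht]⟩
  obtain ⟨hΔ, hn2⟩ := hΔeq
  have hc2 : 2 ≤ A.card := by omega
  have hne : A.Nonempty := card_pos.mp (by omega)
  obtain ⟨v, hv, hdv⟩ := exists_maxDegOn G hne
  set d₂ := (A.erase v).sup (degOn G A) with hd₂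
  by_cases hdiff : maxDegOn G A - d₂ ≤ m
  · calc fkOn G 2 A ≤ maxDegOn G A - d₂ := fkOn_le_diff G hc2 hv hdv
      _ ≤ m := hdiff
  push_neg at hdiff
  have hd₂le : d₂ ≤ maxDegOn G A := Finset.sup_le fun w hw => le_maxDegOn G (mem_of_mem_erase hw)
  have hd₂' : d₂ ≤ n - m - 2 := by omega
  -- v is adjacent to everything else
  have hNv : A.filter (fun w => G.Adj v w) = A.erase v := by
    apply Finset.eq_of_subset_of_card_le
    · intro x hx
      rw [mem_filter] at hx
      exact mem_erase.mpr ⟨fun h => G.irrefl (h ▸ hx.2), hx.1⟩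
    · rw [card_erase_of_mem hv, hcard]
      calc n - 1 = maxDegOn G A := hΔ.symm
        _ = degOn G A v := hdv.symm
        _ = (A.filter fun w => G.Adj v w).card := by rw [degOn]
        _ ≤ _ := le_rfl
  have hmax' : maxDegOn G (A \ {v}) ≤ d₂ - 1 := by
    apply Finset.sup_le
    intro w hw
    rw [mem_sdiff, mem_singleton] at hw
    have hadj : G.Adj v w := by
      have : w ∈ A.filter (fun w => G.Adj v w) := hNv ▸ mem_erase.mpr ⟨hw.2, hw.1⟩
      exact (mem_filter.mp this).2
    have hvmem : v ∈ A.filter (fun x => G.Adj w x) := mem_filter.mpr ⟨hv, hadj.symm⟩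
    have hdeg : degOn G (A \ {v}) w + 1 ≤ degOn G A w := by
      rw [degOn_sdiff, degOn]
      have : ((A.filter fun x => G.Adj w x) \ {v}).card + 1
          = (insert v ((A.filter fun x => G.Adj w x) \ {v})).card := by
        rw [card_insert_of_notMem (by simp)]
      rw [this]
      apply card_le_card
      intro x hx
      rcases mem_insert.mp hx with rfl | hx
      · exact hvmem
      · exact (mem_sdiff.mp hx).1
    have : degOn G A w ≤ d₂ := Finset.le_sup (mem_erase.mpr ⟨hw.2, hw.1⟩)
    omega
  have hih : fkOn G 2 (A \ {v}) ≤ m - 1 := by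
    apply fkOn_le_of_maxDeg
    rcases Nat.exists_eq_add_of_le hm1 with ⟨k, hk⟩
    have hm' : m - 1 = k := by omega
    rw [hm']
    set a := maxDegOn G (A \ {v}) with ha
    rcases Nat.eq_zero_or_pos a with h0 | hpos
    · rw [h0]; omega
    · have hd₂pos : 1 ≤ d₂ := by omega
      have hmm : m ≤ m ^ 2 := Nat.le_self_pow (by norm_num) m
      have hnm : m + 2 ≤ n := by linarith [hn2, hmm, hm1]
      have h6 : 2 * a + 2 * m + 6 ≤ 2 * n := by omega
      have hk2 : m ^ 2 = k ^ 2 + 2 * k + 1 := by rw [hk]; ring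
      linarith [hn2, hk]
  have hsub : ({v} : Finset V) ⊆ A := singleton_subset_iff.mpr hv
  calc fkOn G 2 A ≤ ({v} : Finset V).card + fkOn G 2 (A \ {v}) := fkOn_le_add G hsub
    _ ≤ 1 + (m - 1) := by rw [card_singleton]; omega
    _ ≤ m := by omega
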